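/- arXiv:math/0312507 — 5 statements merged into one kernel-verified Lean document; each statement's English description precedes it below -/
import Mathlib

section
/- Let (g, [,], r) be a quasitriangular Lie bialgebra and let χ ∈ g⊗g satisfy [[r,χ]] + [[χ,r]] + [[χ,χ]] = 0 and ad_ξ(χ + χ₂₁) = 0 for all ξ ∈ g. Then (g, [,], r + χ) is again a quasitriangular Lie bialgebra. -/
open TensorProduct LinearMap Module

namespace Trip

variable {k : Type*} [Field k]
variable {M : Type*} [AddCommGroup M] [Module k M]

variable (k M) in
/-- The tensor flip `τ`. -/
noncomputable def τ : M ⊗[k] M ≃ₗ[k] M ⊗[k] M := TensorProduct.comm k M M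

variable (k M) in
/-- Cyclic rotation `x⊗y⊗z ↦ z⊗x⊗y` on the triple tensor product. -/
noncomputable def ρ : M ⊗[k] (M ⊗[k] M) ≃ₗ[k] M ⊗[k] (M ⊗[k] M) :=
  (TensorProduct.assoc k M M M).symm ≪≫ₗ TensorProduct.comm k (M ⊗[k] M) M

/-- The bracket as a map on the tensor square. -/
noncomputable def brM (B : M →ₗ[k] M →ₗ[k] M) : M ⊗[k] M →ₗ[k] M := TensorProduct.lift B

variable (B : M →ₗ[k] M →ₗ[k] M)

/-- `(a⊗b)⊗(c⊗d) ↦ [a,c]⊗b⊗d`, the `[r₁₂,s₁₃]` component of the Schouten bracket. -/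
noncomputable def s1213 : (M ⊗[k] M) ⊗[k] (M ⊗[k] M) →ₗ[k] M ⊗[k] (M ⊗[k] M) :=
  (TensorProduct.map (brM B) LinearMap.id) ∘ₗ (tensorTensorTensorComm k M M M M).toLinearMap

/-- `(a⊗b)⊗(c⊗d) ↦ a⊗[b,c]⊗d`, the `[r₁₂,s₂₃]` component. -/
noncomputable def s1223 : (M ⊗[k] M) ⊗[k] (M ⊗[k] M) →ₗ[k] M ⊗[k] (M ⊗[k] M) :=
  (LinearMap.lTensor M ((TensorProduct.map (brM B) LinearMap.id) ∘ₗ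
      (TensorProduct.assoc k M M M).symm.toLinearMap)) ∘ₗ
    (TensorProduct.assoc k M M (M ⊗[k] M)).toLinearMap

/-- `(a⊗b)⊗(c⊗d) ↦ a⊗c⊗[b,d]`, the `[r₁₃,s₂₃]` component. -/
noncomputable def s1323 : (M ⊗[k] M) ⊗[k] (M ⊗[k] M) →ₗ[k] M ⊗[k] (M ⊗[k] M) :=
  (LinearMap.lTensor M ((LinearMap.lTensor M (brM B)) ∘ₗ
      ((TensorProduct.assoc k M M M).toLinearMap ∘ₗ
        (TensorProduct.map (TensorProduct.comm k M M).toLinearMap LinearMap.id) ∘ₗ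
          (TensorProduct.assoc k M M M).symm.toLinearMap))) ∘ₗ
    (TensorProduct.assoc k M M (M ⊗[k] M)).toLinearMap

/-- The Schouten bracket `[[r,s]] = [r₁₂,s₁₃] + [r₁₂,s₂₃] + [r₁₃,s₂₃]`. -/
noncomputable def schouten (r s : M ⊗[k] M) : M ⊗[k] (M ⊗[k] M) :=
  (s1213 B) (r ⊗ₜ s) + (s1223 B) (r ⊗ₜ s) + (s1323 B) (r ⊗ₜ s)

/-- The extension of the adjoint-type action `B x` to the tensor square. -/
noncomputable def adT (x : M) : M ⊗[k] M →ₗ[k] M ⊗[k] M :=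
  TensorProduct.map (B x) LinearMap.id + TensorProduct.map LinearMap.id (B x)

/-- The extension of the adjoint-type action `B x` to the triple tensor product. -/
noncomputable def adT3 (x : M) : M ⊗[k] (M ⊗[k] M) →ₗ[k] M ⊗[k] (M ⊗[k] M) :=
  TensorProduct.map (B x) LinearMap.id + LinearMap.lTensor M (adT B x)

/-- The coboundary `δ_r : x ↦ ad_x(r)` of an element `r ∈ M⊗M`, as a linear map. -/
noncomputable def cobdryL (r : M ⊗[k] M) : M →ₗ[k] M ⊗[k] M where
  toFun x := adT B x r
  map_add' x y := by
    simp [adT, map_add, TensorProduct.map_add_left, TensorProduct.map_add_right,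
      LinearMap.add_apply]
    abel
  map_smul' c x := by
    simp [adT, map_smul, TensorProduct.map_smul_left, TensorProduct.map_smul_right,
      LinearMap.add_apply, LinearMap.smul_apply, smul_add]

/-- `B` is a Lie bracket: alternating and satisfying the (Leibniz form of the) Jacobi identity. -/
def IsLieBr : Prop :=
  (∀ x, B x x = 0) ∧ ∀ x y z, B x (B y z) = B (B x y) z + B y (B x z)

/-- Anticocommutativity `δ + τ∘δ = 0`. -/
def Antico (δ : M →ₗ[k] M ⊗[k] M) : Prop := ∀ x, δ x + (τ k M) (δ x) = 0

/-- The co-Jacobi identity `(δ⊗id)∘δ + cyclic = 0`. -/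
def CoJacobi (δ : M →ₗ[k] M ⊗[k] M) : Prop :=
  ∀ x, (TensorProduct.assoc k M M M) ((TensorProduct.map δ LinearMap.id) (δ x)) +
      (ρ k M) ((TensorProduct.assoc k M M M) ((TensorProduct.map δ LinearMap.id) (δ x))) +
      (ρ k M) ((ρ k M) ((TensorProduct.assoc k M M M)
        ((TensorProduct.map δ LinearMap.id) (δ x)))) = 0

/-- The 1-cocycle compatibility `δ[x,y] = ad_x(δ y) − ad_y(δ x)`. -/
def Cocycle (δ : M →ₗ[k] M ⊗[k] M) : Prop :=
  ∀ x y, δ (B x y) = adT B x (δ y) - adT B y (δ x)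

/-- `(M, B, δ)` is a Lie bialgebra. -/
def IsLieBialg (δ : M →ₗ[k] M ⊗[k] M) : Prop :=
  IsLieBr B ∧ Antico δ ∧ CoJacobi δ ∧ Cocycle B δ

/-- The classical Yang–Baxter equation `[[r,r]] = 0`. -/
def CYBE (r : M ⊗[k] M) : Prop := schouten B r r = 0

/-- `(M, B, r)` is a quasitriangular Lie bialgebra: `r` satisfies the CYBE, its symmetric
part is ad-invariant, and the coboundary `δ = ad_•(r)` makes `M` a Lie bialgebra. -/
def IsQT (r : M ⊗[k] M) : Prop :=
  CYBE B r ∧ (∀ x, adT B x (r + (τ k M) r) = 0) ∧ IsLieBialg B (cobdryL B r)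

section contr
variable {N : Type*} [AddCommGroup N] [Module k N]

/-- Contraction against the first tensor factor: `a⊗b ↦ φ(a) • b`. -/
noncomputable def contr1 (φ : Module.Dual k N) : N ⊗[k] N →ₗ[k] N :=
  (TensorProduct.lid k N).toLinearMap ∘ₗ TensorProduct.map φ LinearMap.id

/-- Contraction against the second tensor factor: `a⊗b ↦ φ(b) • a`. -/
noncomputable def contr2 (φ : Module.Dual k N) : N ⊗[k] N →ₗ[k] N :=
  (TensorProduct.rid k N).toLinearMap ∘ₗ TensorProduct.map LinearMap.id φ

end contr

/-- The bracket on the dual space obtained by dualising a cobracket `δ`. -/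
noncomputable def dualBr (δ : M →ₗ[k] M ⊗[k] M) :
    Module.Dual k M →ₗ[k] Module.Dual k M →ₗ[k] Module.Dual k M :=
  LinearMap.compr₂ (TensorProduct.mk k (Module.Dual k M) (Module.Dual k M))
    (δ.dualMap ∘ₗ TensorProduct.dualDistrib k M M)

/-- The cobracket on the dual space obtained by dualising the bracket `B`
(finite-dimensional case). -/
noncomputable def dualCo [FiniteDimensional k M] :
    Module.Dual k M →ₗ[k] Module.Dual k M ⊗[k] Module.Dual k M :=
  (TensorProduct.dualDistribEquiv k M M).symm.toLinearMap ∘ₗ (brM B).dualMap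

end Trip


namespace Trip

variable {k : Type*} [Field k]
variable {M : Type*} [AddCommGroup M] [Module k M]
variable (B : M →ₗ[k] M →ₗ[k] M)

lemma τ_tmul (u v : M) : τ k M (u ⊗ₜ[k] v) = v ⊗ₜ[k] u := rfl

lemma ρ_tmul (u v w : M) : ρ k M (u ⊗ₜ[k] (v ⊗ₜ[k] w)) = w ⊗ₜ[k] (u ⊗ₜ[k] v) := rfl

lemma adT_tmul (x u v : M) :
    adT B x (u ⊗ₜ[k] v) = B x u ⊗ₜ[k] v + u ⊗ₜ[k] B x v := by
  simp [adT]

lemma cobdryL_apply (s : M ⊗[k] M) (m : M) : cobdryL B s m = adT B m s := rfl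

lemma skew (hB : IsLieBr B) (u v : M) : B u v = -B v u := by
  have h := hB.1 (u + v)
  simp only [map_add, LinearMap.add_apply, hB.1] at h
  refine eq_neg_of_add_eq_zero_left ?_
  rw [← h]; abel

lemma jacL (hB : IsLieBr B) (u v w : M) :
    B (B u v) w = B u (B v w) - B v (B u w) := by
  rw [hB.2 u v w]; abel

lemma jac3 (hB : IsLieBr B) (u v w : M) :
    B w (B u v) = B v (B u w) - B u (B v w) := by
  rw [hB.2 w u v, skew B hB w u, skew B hB w v, map_neg B, LinearMap.neg_apply,
    map_neg (B u), skew B hB (B u w) v]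
  abel

lemma τ_adT (x : M) (t : M ⊗[k] M) : τ k M (adT B x t) = adT B x (τ k M t) := by
  induction t using TensorProduct.induction_on with
  | zero => simp
  | tmul u v => simp only [adT_tmul, map_add, τ_tmul]; abel
  | add u v hu hv => simp only [map_add, hu, hv]

lemma adT_bracket (hB : IsLieBr B) (x y : M) (t : M ⊗[k] M) :
    adT B (B x y) t = adT B x (adT B y t) - adT B y (adT B x t) := by
  induction t using TensorProduct.induction_on with
  | zero => simp
  | tmul u v =>
    simp only [adT_tmul, map_add, jacL B hB x y u, jacL B hB x y v,
      TensorProduct.add_tmul, TensorProduct.tmul_add, TensorProduct.sub_tmul,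
      TensorProduct.tmul_sub]
    abel
  | add u v hu hv => simp only [map_add, hu, hv]; abel

lemma schouten_expand (u v : M ⊗[k] M) :
    schouten B (u + v) (u + v) =
      schouten B u u + (schouten B u v + schouten B v u + schouten B v v) := by
  simp only [schouten, TensorProduct.add_tmul, TensorProduct.tmul_add, map_add]
  abel

lemma s1213_tmul (p q u v : M) :
    s1213 B ((p ⊗ₜ[k] q) ⊗ₜ[k] (u ⊗ₜ[k] v)) = B p u ⊗ₜ[k] (q ⊗ₜ[k] v) := by
  simp [s1213, brM, TensorProduct.tensorTensorTensorComm_tmul]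

lemma s1223_tmul (p q u v : M) :
    s1223 B ((p ⊗ₜ[k] q) ⊗ₜ[k] (u ⊗ₜ[k] v)) = p ⊗ₜ[k] (B q u ⊗ₜ[k] v) := by
  simp [s1223, brM]

lemma s1323_tmul (p q u v : M) :
    s1323 B ((p ⊗ₜ[k] q) ⊗ₜ[k] (u ⊗ₜ[k] v)) = p ⊗ₜ[k] (u ⊗ₜ[k] B q v) := by
  simp [s1323, brM]

variable (k M) in
/-- The Schouten bracket as a linear map on the tensor product. -/
noncomputable def schM : (M ⊗[k] M) ⊗[k] (M ⊗[k] M) →ₗ[k] M ⊗[k] (M ⊗[k] M) :=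
  s1213 B + s1223 B + s1323 B

lemma schM_tmul (s t : M ⊗[k] M) : schM k M B (s ⊗ₜ[k] t) = schouten B s t := by
  simp [schM, schouten]

set_option maxHeartbeats 4000000 in
lemma corePure (hB : IsLieBr B) (x a b c d : M) :
    B (B x a) c ⊗ₜ[k] (d ⊗ₜ[k] b) + c ⊗ₜ[k] (B (B x a) d ⊗ₜ[k] b)
      + B a c ⊗ₜ[k] (d ⊗ₜ[k] B x b) + c ⊗ₜ[k] (B a d ⊗ₜ[k] B x b)
      + b ⊗ₜ[k] (B (B x a) c ⊗ₜ[k] d) + b ⊗ₜ[k] (c ⊗ₜ[k] B (B x a) d)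
      + B x b ⊗ₜ[k] (B a c ⊗ₜ[k] d) + B x b ⊗ₜ[k] (c ⊗ₜ[k] B a d)
      + d ⊗ₜ[k] (b ⊗ₜ[k] B (B x a) c) + B (B x a) d ⊗ₜ[k] (b ⊗ₜ[k] c)
      + d ⊗ₜ[k] (B x b ⊗ₜ[k] B a c) + B a d ⊗ₜ[k] (B x b ⊗ₜ[k] c) =
      LinearMap.lTensor M (TensorProduct.comm k M M).toLinearMap
        (LinearMap.lTensor M (LinearMap.rTensor M (B x))
          (schM k M B ((c ⊗ₜ[k] d) ⊗ₜ[k] (a ⊗ₜ[k] b))))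
    + LinearMap.lTensor M (TensorProduct.comm k M M).toLinearMap
        (LinearMap.lTensor M (LinearMap.lTensor M (B x))
          (schM k M B ((c ⊗ₜ[k] d) ⊗ₜ[k] (a ⊗ₜ[k] b))))
    - TensorProduct.map (B x) LinearMap.id (schM k M B ((a ⊗ₜ[k] b) ⊗ₜ[k] (c ⊗ₜ[k] d)))
    + LinearMap.lTensor M (TensorProduct.mk k M M b)
        (adT B (B x a) (c ⊗ₜ[k] d + d ⊗ₜ[k] c))
    - c ⊗ₜ[k] (adT B (B x d) (a ⊗ₜ[k] b + b ⊗ₜ[k] a))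
    - c ⊗ₜ[k] (TensorProduct.map (B d) LinearMap.id (adT B x (a ⊗ₜ[k] b + b ⊗ₜ[k] a)))
    - LinearMap.lTensor M (TensorProduct.mk k M M c)
        (TensorProduct.map LinearMap.id (B d) (adT B x (a ⊗ₜ[k] b + b ⊗ₜ[k] a)))
    + LinearMap.lTensor M (TensorProduct.mk k M M (B x b))
        (adT B a (c ⊗ₜ[k] d + d ⊗ₜ[k] c))
    + LinearMap.lTensor M (TensorProduct.mk k M M b)
        (TensorProduct.map (B a) LinearMap.id (adT B x (c ⊗ₜ[k] d + d ⊗ₜ[k] c)))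
    - LinearMap.lTensor M (TensorProduct.mk k M M d)
        (TensorProduct.map (B c) LinearMap.id (adT B x (a ⊗ₜ[k] b + b ⊗ₜ[k] a)))
    - LinearMap.lTensor M ((TensorProduct.mk k M M).flip d)
        (TensorProduct.map LinearMap.id (B c) (adT B x (a ⊗ₜ[k] b + b ⊗ₜ[k] a)))
    - (a ⊗ₜ[k] (c ⊗ₜ[k] B d (B b x)) - c ⊗ₜ[k] (a ⊗ₜ[k] B b (B d x)))
    - (a ⊗ₜ[k] (B c (B b x) ⊗ₜ[k] d) - c ⊗ₜ[k] (B a (B d x) ⊗ₜ[k] b))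
    + (B a (B d x) ⊗ₜ[k] (b ⊗ₜ[k] c) - B c (B b x) ⊗ₜ[k] (d ⊗ₜ[k] a))
    + (B a d ⊗ₜ[k] (b ⊗ₜ[k] B c x) - B c b ⊗ₜ[k] (d ⊗ₜ[k] B a x)) := by
  have jL := jacL B hB
  have sk := skew B hB
  have j3 := jac3 B hB
  simp only [schM, LinearMap.add_apply, s1213_tmul, s1223_tmul, s1323_tmul, adT_tmul,
    map_add, TensorProduct.map_tmul, LinearMap.lTensor_tmul, LinearMap.rTensor_tmul,
    TensorProduct.mk_apply, LinearMap.flip_apply, TensorProduct.comm_tmul,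
    LinearEquiv.coe_coe, LinearMap.id_coe, id_eq, TensorProduct.tmul_add,
    TensorProduct.add_tmul, jL, TensorProduct.sub_tmul, TensorProduct.tmul_sub, map_sub]
  simp only [sk b a, sk c a, sk c b, sk d a, sk d b, sk d c, sk x a, sk x b, sk x c,
    sk x d, map_neg, LinearMap.neg_apply, TensorProduct.neg_tmul, TensorProduct.tmul_neg,
    neg_neg]
  simp only [j3 a b c, j3 a b d, j3 a c d, j3 b c d, j3 a b x, j3 a c x, j3 a d x,
    j3 b c x, j3 b d x, j3 c d x, map_sub, TensorProduct.sub_tmul, TensorProduct.tmul_sub,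
    map_neg, TensorProduct.neg_tmul, TensorProduct.tmul_neg, neg_neg]
  abel

set_option maxHeartbeats 4000000 in
lemma coJacobi_cobdryL (hB : IsLieBr B) (s : M ⊗[k] M) (hs : schouten B s s = 0)
    (hP : ∀ y, adT B y (s + τ k M s) = 0) : CoJacobi (cobdryL B s) := by
  intro x
  obtain ⟨S, hS⟩ := TensorProduct.exists_finset s
  have hQ : ∀ y : M, ∑ q ∈ S, adT B y (q.1 ⊗ₜ[k] q.2 + q.2 ⊗ₜ[k] q.1) = 0 := by
    intro y
    rw [← map_sum, Finset.sum_add_distrib]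
    have h1 : ∑ q ∈ S, q.2 ⊗ₜ[k] q.1 = τ k M s := by
      rw [hS, map_sum]; simp only [τ_tmul]
    rw [h1, ← hS]
    exact hP y
  have hss : schM k M B (s ⊗ₜ[k] s) = 0 := by rw [schM_tmul]; exact hs
  have hpure_oi : ∑ q ∈ S, ∑ p ∈ S, ((p.1 ⊗ₜ[k] p.2) ⊗ₜ[k] (q.1 ⊗ₜ[k] q.2)) = s ⊗ₜ[k] s := by
    simp only [← TensorProduct.sum_tmul, ← TensorProduct.tmul_sum, ← hS]
  have hpure_io : ∑ q ∈ S, ∑ p ∈ S, ((q.1 ⊗ₜ[k] q.2) ⊗ₜ[k] (p.1 ⊗ₜ[k] p.2)) = s ⊗ₜ[k] s := by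
    simp only [← TensorProduct.sum_tmul, ← TensorProduct.tmul_sum, ← hS]
  trans ∑ q ∈ S, ∑ p ∈ S,
      (B (B x q.1) p.1 ⊗ₜ[k] (p.2 ⊗ₜ[k] q.2) + p.1 ⊗ₜ[k] (B (B x q.1) p.2 ⊗ₜ[k] q.2)
      + B q.1 p.1 ⊗ₜ[k] (p.2 ⊗ₜ[k] B x q.2) + p.1 ⊗ₜ[k] (B q.1 p.2 ⊗ₜ[k] B x q.2)
      + q.2 ⊗ₜ[k] (B (B x q.1) p.1 ⊗ₜ[k] p.2) + q.2 ⊗ₜ[k] (p.1 ⊗ₜ[k] B (B x q.1) p.2)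
      + B x q.2 ⊗ₜ[k] (B q.1 p.1 ⊗ₜ[k] p.2) + B x q.2 ⊗ₜ[k] (p.1 ⊗ₜ[k] B q.1 p.2)
      + p.2 ⊗ₜ[k] (q.2 ⊗ₜ[k] B (B x q.1) p.1) + B (B x q.1) p.2 ⊗ₜ[k] (q.2 ⊗ₜ[k] p.1)
      + p.2 ⊗ₜ[k] (B x q.2 ⊗ₜ[k] B q.1 p.1) + B q.1 p.2 ⊗ₜ[k] (B x q.2 ⊗ₜ[k] p.1))
  · simp only [cobdryL_apply, hS, map_sum, map_add, adT_tmul, TensorProduct.map_tmul,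
      LinearMap.id_coe, id_eq, TensorProduct.assoc_tmul, ρ_tmul, TensorProduct.sum_tmul,
      TensorProduct.tmul_sum, TensorProduct.add_tmul, TensorProduct.tmul_add,
      Finset.sum_add_distrib]
    abel
  have step2 : (∑ q ∈ S, ∑ p ∈ S,
      (B (B x q.1) p.1 ⊗ₜ[k] (p.2 ⊗ₜ[k] q.2) + p.1 ⊗ₜ[k] (B (B x q.1) p.2 ⊗ₜ[k] q.2)
      + B q.1 p.1 ⊗ₜ[k] (p.2 ⊗ₜ[k] B x q.2) + p.1 ⊗ₜ[k] (B q.1 p.2 ⊗ₜ[k] B x q.2)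
      + q.2 ⊗ₜ[k] (B (B x q.1) p.1 ⊗ₜ[k] p.2) + q.2 ⊗ₜ[k] (p.1 ⊗ₜ[k] B (B x q.1) p.2)
      + B x q.2 ⊗ₜ[k] (B q.1 p.1 ⊗ₜ[k] p.2) + B x q.2 ⊗ₜ[k] (p.1 ⊗ₜ[k] B q.1 p.2)
      + p.2 ⊗ₜ[k] (q.2 ⊗ₜ[k] B (B x q.1) p.1) + B (B x q.1) p.2 ⊗ₜ[k] (q.2 ⊗ₜ[k] p.1)
      + p.2 ⊗ₜ[k] (B x q.2 ⊗ₜ[k] B q.1 p.1) + B q.1 p.2 ⊗ₜ[k] (B x q.2 ⊗ₜ[k] p.1))) =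
      ∑ q ∈ S, ∑ p ∈ S,
      (LinearMap.lTensor M (TensorProduct.comm k M M).toLinearMap
        (LinearMap.lTensor M (LinearMap.rTensor M (B x))
          (schM k M B ((p.1 ⊗ₜ[k] p.2) ⊗ₜ[k] (q.1 ⊗ₜ[k] q.2))))
    + LinearMap.lTensor M (TensorProduct.comm k M M).toLinearMap
        (LinearMap.lTensor M (LinearMap.lTensor M (B x))
          (schM k M B ((p.1 ⊗ₜ[k] p.2) ⊗ₜ[k] (q.1 ⊗ₜ[k] q.2))))
    - TensorProduct.map (B x) LinearMap.id (schM k M B ((q.1 ⊗ₜ[k] q.2) ⊗ₜ[k] (p.1 ⊗ₜ[k] p.2)))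
    + LinearMap.lTensor M (TensorProduct.mk k M M q.2) (adT B (B x q.1) (p.1 ⊗ₜ[k] p.2 + p.2 ⊗ₜ[k] p.1))
    - p.1 ⊗ₜ[k] (adT B (B x p.2) (q.1 ⊗ₜ[k] q.2 + q.2 ⊗ₜ[k] q.1))
    - p.1 ⊗ₜ[k] (TensorProduct.map (B p.2) LinearMap.id (adT B x (q.1 ⊗ₜ[k] q.2 + q.2 ⊗ₜ[k] q.1)))
    - LinearMap.lTensor M (TensorProduct.mk k M M p.1)
        (TensorProduct.map LinearMap.id (B p.2) (adT B x (q.1 ⊗ₜ[k] q.2 + q.2 ⊗ₜ[k] q.1)))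
    + LinearMap.lTensor M (TensorProduct.mk k M M (B x q.2)) (adT B q.1 (p.1 ⊗ₜ[k] p.2 + p.2 ⊗ₜ[k] p.1))
    + LinearMap.lTensor M (TensorProduct.mk k M M q.2)
        (TensorProduct.map (B q.1) LinearMap.id (adT B x (p.1 ⊗ₜ[k] p.2 + p.2 ⊗ₜ[k] p.1)))
    - LinearMap.lTensor M (TensorProduct.mk k M M p.2)
        (TensorProduct.map (B p.1) LinearMap.id (adT B x (q.1 ⊗ₜ[k] q.2 + q.2 ⊗ₜ[k] q.1)))
    - LinearMap.lTensor M ((TensorProduct.mk k M M).flip p.2)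
        (TensorProduct.map LinearMap.id (B p.1) (adT B x (q.1 ⊗ₜ[k] q.2 + q.2 ⊗ₜ[k] q.1)))
    - (q.1 ⊗ₜ[k] (p.1 ⊗ₜ[k] B p.2 (B q.2 x)) - p.1 ⊗ₜ[k] (q.1 ⊗ₜ[k] B q.2 (B p.2 x)))
    - (q.1 ⊗ₜ[k] (B p.1 (B q.2 x) ⊗ₜ[k] p.2) - p.1 ⊗ₜ[k] (B q.1 (B p.2 x) ⊗ₜ[k] q.2))
    + (B q.1 (B p.2 x) ⊗ₜ[k] (q.2 ⊗ₜ[k] p.1) - B p.1 (B q.2 x) ⊗ₜ[k] (p.2 ⊗ₜ[k] q.1))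
    + (B q.1 p.2 ⊗ₜ[k] (q.2 ⊗ₜ[k] B p.1 x) - B p.1 q.2 ⊗ₜ[k] (p.2 ⊗ₜ[k] B q.1 x))) :=
    Finset.sum_congr rfl fun q _ => Finset.sum_congr rfl fun p _ =>
      corePure B hB x q.1 q.2 p.1 p.2
  rw [step2]
  have hsplit : (∑ q ∈ S, ∑ p ∈ S,
      (LinearMap.lTensor M (TensorProduct.comm k M M).toLinearMap
        (LinearMap.lTensor M (LinearMap.rTensor M (B x))
          (schM k M B ((p.1 ⊗ₜ[k] p.2) ⊗ₜ[k] (q.1 ⊗ₜ[k] q.2))))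
    + LinearMap.lTensor M (TensorProduct.comm k M M).toLinearMap
        (LinearMap.lTensor M (LinearMap.lTensor M (B x))
          (schM k M B ((p.1 ⊗ₜ[k] p.2) ⊗ₜ[k] (q.1 ⊗ₜ[k] q.2))))
    - TensorProduct.map (B x) LinearMap.id (schM k M B ((q.1 ⊗ₜ[k] q.2) ⊗ₜ[k] (p.1 ⊗ₜ[k] p.2)))
    + LinearMap.lTensor M (TensorProduct.mk k M M q.2) (adT B (B x q.1) (p.1 ⊗ₜ[k] p.2 + p.2 ⊗ₜ[k] p.1))
    - p.1 ⊗ₜ[k] (adT B (B x p.2) (q.1 ⊗ₜ[k] q.2 + q.2 ⊗ₜ[k] q.1))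
    - p.1 ⊗ₜ[k] (TensorProduct.map (B p.2) LinearMap.id (adT B x (q.1 ⊗ₜ[k] q.2 + q.2 ⊗ₜ[k] q.1)))
    - LinearMap.lTensor M (TensorProduct.mk k M M p.1)
        (TensorProduct.map LinearMap.id (B p.2) (adT B x (q.1 ⊗ₜ[k] q.2 + q.2 ⊗ₜ[k] q.1)))
    + LinearMap.lTensor M (TensorProduct.mk k M M (B x q.2)) (adT B q.1 (p.1 ⊗ₜ[k] p.2 + p.2 ⊗ₜ[k] p.1))
    + LinearMap.lTensor M (TensorProduct.mk k M M q.2)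
        (TensorProduct.map (B q.1) LinearMap.id (adT B x (p.1 ⊗ₜ[k] p.2 + p.2 ⊗ₜ[k] p.1)))
    - LinearMap.lTensor M (TensorProduct.mk k M M p.2)
        (TensorProduct.map (B p.1) LinearMap.id (adT B x (q.1 ⊗ₜ[k] q.2 + q.2 ⊗ₜ[k] q.1)))
    - LinearMap.lTensor M ((TensorProduct.mk k M M).flip p.2)
        (TensorProduct.map LinearMap.id (B p.1) (adT B x (q.1 ⊗ₜ[k] q.2 + q.2 ⊗ₜ[k] q.1)))
    - (q.1 ⊗ₜ[k] (p.1 ⊗ₜ[k] B p.2 (B q.2 x)) - p.1 ⊗ₜ[k] (q.1 ⊗ₜ[k] B q.2 (B p.2 x)))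
    - (q.1 ⊗ₜ[k] (B p.1 (B q.2 x) ⊗ₜ[k] p.2) - p.1 ⊗ₜ[k] (B q.1 (B p.2 x) ⊗ₜ[k] q.2))
    + (B q.1 (B p.2 x) ⊗ₜ[k] (q.2 ⊗ₜ[k] p.1) - B p.1 (B q.2 x) ⊗ₜ[k] (p.2 ⊗ₜ[k] q.1))
    + (B q.1 p.2 ⊗ₜ[k] (q.2 ⊗ₜ[k] B p.1 x) - B p.1 q.2 ⊗ₜ[k] (p.2 ⊗ₜ[k] B q.1 x)))) =
      (∑ q ∈ S, ∑ p ∈ S, LinearMap.lTensor M (TensorProduct.comm k M M).toLinearMap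
        (LinearMap.lTensor M (LinearMap.rTensor M (B x))
          (schM k M B ((p.1 ⊗ₜ[k] p.2) ⊗ₜ[k] (q.1 ⊗ₜ[k] q.2)))))
    + (∑ q ∈ S, ∑ p ∈ S, LinearMap.lTensor M (TensorProduct.comm k M M).toLinearMap
        (LinearMap.lTensor M (LinearMap.lTensor M (B x))
          (schM k M B ((p.1 ⊗ₜ[k] p.2) ⊗ₜ[k] (q.1 ⊗ₜ[k] q.2)))))
    - (∑ q ∈ S, ∑ p ∈ S, TensorProduct.map (B x) LinearMap.id (schM k M B ((q.1 ⊗ₜ[k] q.2) ⊗ₜ[k] (p.1 ⊗ₜ[k] p.2))))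
    + (∑ q ∈ S, ∑ p ∈ S, LinearMap.lTensor M (TensorProduct.mk k M M q.2) (adT B (B x q.1) (p.1 ⊗ₜ[k] p.2 + p.2 ⊗ₜ[k] p.1)))
    - (∑ q ∈ S, ∑ p ∈ S, p.1 ⊗ₜ[k] (adT B (B x p.2) (q.1 ⊗ₜ[k] q.2 + q.2 ⊗ₜ[k] q.1)))
    - (∑ q ∈ S, ∑ p ∈ S, p.1 ⊗ₜ[k] (TensorProduct.map (B p.2) LinearMap.id (adT B x (q.1 ⊗ₜ[k] q.2 + q.2 ⊗ₜ[k] q.1))))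
    - (∑ q ∈ S, ∑ p ∈ S, LinearMap.lTensor M (TensorProduct.mk k M M p.1)
        (TensorProduct.map LinearMap.id (B p.2) (adT B x (q.1 ⊗ₜ[k] q.2 + q.2 ⊗ₜ[k] q.1))))
    + (∑ q ∈ S, ∑ p ∈ S, LinearMap.lTensor M (TensorProduct.mk k M M (B x q.2)) (adT B q.1 (p.1 ⊗ₜ[k] p.2 + p.2 ⊗ₜ[k] p.1)))
    + (∑ q ∈ S, ∑ p ∈ S, LinearMap.lTensor M (TensorProduct.mk k M M q.2)
        (TensorProduct.map (B q.1) LinearMap.id (adT B x (p.1 ⊗ₜ[k] p.2 + p.2 ⊗ₜ[k] p.1))))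
    - (∑ q ∈ S, ∑ p ∈ S, LinearMap.lTensor M (TensorProduct.mk k M M p.2)
        (TensorProduct.map (B p.1) LinearMap.id (adT B x (q.1 ⊗ₜ[k] q.2 + q.2 ⊗ₜ[k] q.1))))
    - (∑ q ∈ S, ∑ p ∈ S, LinearMap.lTensor M ((TensorProduct.mk k M M).flip p.2)
        (TensorProduct.map LinearMap.id (B p.1) (adT B x (q.1 ⊗ₜ[k] q.2 + q.2 ⊗ₜ[k] q.1))))
    - ((∑ q ∈ S, ∑ p ∈ S, q.1 ⊗ₜ[k] (p.1 ⊗ₜ[k] B p.2 (B q.2 x))) - (∑ q ∈ S, ∑ p ∈ S, p.1 ⊗ₜ[k] (q.1 ⊗ₜ[k] B q.2 (B p.2 x))))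
    - ((∑ q ∈ S, ∑ p ∈ S, q.1 ⊗ₜ[k] (B p.1 (B q.2 x) ⊗ₜ[k] p.2)) - (∑ q ∈ S, ∑ p ∈ S, p.1 ⊗ₜ[k] (B q.1 (B p.2 x) ⊗ₜ[k] q.2)))
    + ((∑ q ∈ S, ∑ p ∈ S, B q.1 (B p.2 x) ⊗ₜ[k] (q.2 ⊗ₜ[k] p.1)) - (∑ q ∈ S, ∑ p ∈ S, B p.1 (B q.2 x) ⊗ₜ[k] (p.2 ⊗ₜ[k] q.1)))
    + ((∑ q ∈ S, ∑ p ∈ S, B q.1 p.2 ⊗ₜ[k] (q.2 ⊗ₜ[k] B p.1 x)) - (∑ q ∈ S, ∑ p ∈ S, B p.1 q.2 ⊗ₜ[k] (p.2 ⊗ₜ[k] B q.1 x))) := by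
    simp only [Finset.sum_add_distrib, Finset.sum_sub_distrib]
  rw [hsplit]
  have hG1 : (∑ q ∈ S, ∑ p ∈ S, LinearMap.lTensor M (TensorProduct.comm k M M).toLinearMap
        (LinearMap.lTensor M (LinearMap.rTensor M (B x))
          (schM k M B ((p.1 ⊗ₜ[k] p.2) ⊗ₜ[k] (q.1 ⊗ₜ[k] q.2))))) = 0 := by
    simp only [← map_sum]; rw [hpure_oi, hss]; simp
  have hG2 : (∑ q ∈ S, ∑ p ∈ S, LinearMap.lTensor M (TensorProduct.comm k M M).toLinearMap
        (LinearMap.lTensor M (LinearMap.lTensor M (B x))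
          (schM k M B ((p.1 ⊗ₜ[k] p.2) ⊗ₜ[k] (q.1 ⊗ₜ[k] q.2))))) = 0 := by
    simp only [← map_sum]; rw [hpure_oi, hss]; simp
  have hG3 : (∑ q ∈ S, ∑ p ∈ S, TensorProduct.map (B x) LinearMap.id (schM k M B ((q.1 ⊗ₜ[k] q.2) ⊗ₜ[k] (p.1 ⊗ₜ[k] p.2)))) = 0 := by
    simp only [← map_sum]; rw [hpure_io, hss]; simp
  have hG4 : (∑ q ∈ S, ∑ p ∈ S, LinearMap.lTensor M (TensorProduct.mk k M M q.2) (adT B (B x q.1) (p.1 ⊗ₜ[k] p.2 + p.2 ⊗ₜ[k] p.1))) = 0 := by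
    refine Finset.sum_eq_zero fun q _ => ?_
    rw [← map_sum, hQ (B x q.1), map_zero]
  have hG5 : (∑ q ∈ S, ∑ p ∈ S, p.1 ⊗ₜ[k] (adT B (B x p.2) (q.1 ⊗ₜ[k] q.2 + q.2 ⊗ₜ[k] q.1))) = 0 := by
    rw [Finset.sum_comm]
    refine Finset.sum_eq_zero fun p _ => ?_
    rw [← TensorProduct.tmul_sum, hQ (B x p.2), TensorProduct.tmul_zero]
  have hG6 : (∑ q ∈ S, ∑ p ∈ S, p.1 ⊗ₜ[k] (TensorProduct.map (B p.2) LinearMap.id (adT B x (q.1 ⊗ₜ[k] q.2 + q.2 ⊗ₜ[k] q.1)))) = 0 := by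
    rw [Finset.sum_comm]
    refine Finset.sum_eq_zero fun p _ => ?_
    rw [← TensorProduct.tmul_sum, ← map_sum, hQ x, map_zero, TensorProduct.tmul_zero]
  have hG7 : (∑ q ∈ S, ∑ p ∈ S, LinearMap.lTensor M (TensorProduct.mk k M M p.1)
        (TensorProduct.map LinearMap.id (B p.2) (adT B x (q.1 ⊗ₜ[k] q.2 + q.2 ⊗ₜ[k] q.1)))) = 0 := by
    rw [Finset.sum_comm]
    refine Finset.sum_eq_zero fun p _ => ?_
    rw [← map_sum, ← map_sum, hQ x, map_zero, map_zero]
  have hG8 : (∑ q ∈ S, ∑ p ∈ S, LinearMap.lTensor M (TensorProduct.mk k M M (B x q.2)) (adT B q.1 (p.1 ⊗ₜ[k] p.2 + p.2 ⊗ₜ[k] p.1))) = 0 := by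
    refine Finset.sum_eq_zero fun q _ => ?_
    rw [← map_sum, hQ q.1, map_zero]
  have hG9 : (∑ q ∈ S, ∑ p ∈ S, LinearMap.lTensor M (TensorProduct.mk k M M q.2)
        (TensorProduct.map (B q.1) LinearMap.id (adT B x (p.1 ⊗ₜ[k] p.2 + p.2 ⊗ₜ[k] p.1)))) = 0 := by
    refine Finset.sum_eq_zero fun q _ => ?_
    rw [← map_sum, ← map_sum, hQ x, map_zero, map_zero]
  have hG10 : (∑ q ∈ S, ∑ p ∈ S, LinearMap.lTensor M (TensorProduct.mk k M M p.2)
        (TensorProduct.map (B p.1) LinearMap.id (adT B x (q.1 ⊗ₜ[k] q.2 + q.2 ⊗ₜ[k] q.1)))) = 0 := by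
    rw [Finset.sum_comm]
    refine Finset.sum_eq_zero fun p _ => ?_
    rw [← map_sum, ← map_sum, hQ x, map_zero, map_zero]
  have hG11 : (∑ q ∈ S, ∑ p ∈ S, LinearMap.lTensor M ((TensorProduct.mk k M M).flip p.2)
        (TensorProduct.map LinearMap.id (B p.1) (adT B x (q.1 ⊗ₜ[k] q.2 + q.2 ⊗ₜ[k] q.1)))) = 0 := by
    rw [Finset.sum_comm]
    refine Finset.sum_eq_zero fun p _ => ?_
    rw [← map_sum, ← map_sum, hQ x, map_zero, map_zero]
  have hB2 : (∑ q ∈ S, ∑ p ∈ S, p.1 ⊗ₜ[k] (q.1 ⊗ₜ[k] B q.2 (B p.2 x))) = (∑ q ∈ S, ∑ p ∈ S, q.1 ⊗ₜ[k] (p.1 ⊗ₜ[k] B p.2 (B q.2 x))) := Finset.sum_comm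
  have hGg2 : (∑ q ∈ S, ∑ p ∈ S, p.1 ⊗ₜ[k] (B q.1 (B p.2 x) ⊗ₜ[k] q.2)) = (∑ q ∈ S, ∑ p ∈ S, q.1 ⊗ₜ[k] (B p.1 (B q.2 x) ⊗ₜ[k] p.2)) := Finset.sum_comm
  have hI2 : (∑ q ∈ S, ∑ p ∈ S, B p.1 (B q.2 x) ⊗ₜ[k] (p.2 ⊗ₜ[k] q.1)) = (∑ q ∈ S, ∑ p ∈ S, B q.1 (B p.2 x) ⊗ₜ[k] (q.2 ⊗ₜ[k] p.1)) := Finset.sum_comm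
  have hK2 : (∑ q ∈ S, ∑ p ∈ S, B p.1 q.2 ⊗ₜ[k] (p.2 ⊗ₜ[k] B q.1 x)) = (∑ q ∈ S, ∑ p ∈ S, B q.1 p.2 ⊗ₜ[k] (q.2 ⊗ₜ[k] B p.1 x)) := Finset.sum_comm
  rw [hG1, hG2, hG3, hG4, hG5, hG6, hG7, hG8, hG9, hG10, hG11, hB2, hGg2, hI2, hK2]
  abel

end Trip

/-- Twisting a quasitriangular structure by a cocycle `χ` with
`[[r,χ]]+[[χ,r]]+[[χ,χ]] = 0` and `ad_ξ(χ+χ₂₁)=0` yields again a quasitriangular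
Lie bialgebra `(g, [,], r+χ)`. -/
theorem statement2 {k : Type*} [Field k] {M : Type*} [AddCommGroup M] [Module k M]
    (B : M →ₗ[k] M →ₗ[k] M) (r χ : M ⊗[k] M) (h : Trip.IsQT B r)
    (h1 : Trip.schouten B r χ + Trip.schouten B χ r + Trip.schouten B χ χ = 0)
    (h2 : ∀ ξ : M, Trip.adT B ξ (χ + (Trip.τ k M) χ) = 0) :
    Trip.IsQT B (r + χ) := by
  obtain ⟨hcybe, hinv, hB, hbialg⟩ : Trip.CYBE B r ∧ (∀ x, Trip.adT B x (r + Trip.τ k M r) = 0)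
      ∧ Trip.IsLieBr B ∧ True := ⟨h.1, h.2.1, h.2.2.1, trivial⟩
  have hP : ∀ y, Trip.adT B y ((r + χ) + Trip.τ k M (r + χ)) = 0 := by
    intro y
    have : (r + χ) + Trip.τ k M (r + χ) = (r + Trip.τ k M r) + (χ + Trip.τ k M χ) := by
      rw [map_add]; abel
    rw [this, map_add, hinv y, h2 y, add_zero]
  have hs : Trip.schouten B (r + χ) (r + χ) = 0 := by
    rw [Trip.schouten_expand]
    rw [hcybe]
    rw [show Trip.schouten B r χ + Trip.schouten B χ r + Trip.schouten B χ χ = 0 from h1]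
    simp
  refine ⟨hs, hP, hB, ?_, ?_, ?_⟩
  · -- Antico
    intro x
    show Trip.adT B x (r + χ) + Trip.τ k M (Trip.adT B x (r + χ)) = 0
    rw [Trip.τ_adT, ← map_add, hP x]
  · -- CoJacobi
    exact Trip.coJacobi_cobdryL B hB (r + χ) hs hP
  · -- Cocycle
    intro x y
    show Trip.adT B (B x y) (r + χ) = _
    rw [Trip.adT_bracket B hB]
    rfl
end

section
/- Let (g, r) be a quasitriangular Lie bialgebra. Then the underlying vector space of g, with the Lie bracket of g, the adjoint action of g, and the braided cobracket δ̲x = 2r₊⁽¹⁾ ⊗ [x, r₊⁽²⁾], is a braided-Lie bialgebra in the category of g-modules (the transmutation g̲ of g). In particular dδ̲ = ψ, i.e. δ̲([a,b]) = ad_a(δ̲b) − ad_b(δ̲a) − ψ(a⊗b), where ψ(a⊗b) = 2r₊ ▷ (a⊗b − b⊗a) is the infinitesimal braiding. -/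
/-!
Put `s = 2r₊ = r + τ r`, a symmetric `ad`-invariant tensor, so that `δ̲x = (id ⊗ ad_x) s`.
Invariance reads `(ad_x ⊗ id) s = -(id ⊗ ad_x) s`; with the Jacobi identity it gives covariance
of `δ̲`, with symmetry its antisymmetry, and with skew-symmetry of the bracket
`ψ(a⊗b) = δ̲[a,b]`, which turns `dδ̲ = ψ` into a consequence of covariance.

For co-Jacobi, `(δ̲ ⊗ id) δ̲x = (id ⊗ id ⊗ ad_x) U` with `U = (δ̲ ⊗ id) s`. Computing the
Schouten component `[s₁₂, s₂₃]` in two ways shows `(id ⊗ δ̲) s = (δ̲ ⊗ id) s`; as `s` is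
symmetric, this says that `U` is fixed by the cyclic rotation. So the cyclic sum of
`(δ̲ ⊗ id) δ̲x` is `ad_x U`, which vanishes because `U` is built equivariantly from the
invariant `s`.
-/

open TensorProduct LinearMap Module

namespace Trip

variable {k : Type*} [Field k] {M : Type*} [AddCommGroup M] [Module k M]
variable (B : M →ₗ[k] M →ₗ[k] M)

/-- The braided cobracket of the transmutation: `δ̲x = 2r₊⁽¹⁾ ⊗ [x, r₊⁽²⁾]`. -/
noncomputable def bco (r : M ⊗[k] M) : M →ₗ[k] M ⊗[k] M where
  toFun x := (LinearMap.lTensor M (B x)) (r + (τ k M) r)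
  map_add' x y := by
    simp [map_add, LinearMap.lTensor_add, LinearMap.add_apply]; abel
  map_smul' c x := by
    simp [map_smul, LinearMap.lTensor_smul, LinearMap.smul_apply]

/-- The action of an element `t ∈ g⊗g` on `M⊗M`, each tensor factor of `t` acting on the
corresponding factor: `(x⊗y) ▷ (a⊗b) = [x,a]⊗[y,b]`. -/
noncomputable def actOf (t : M ⊗[k] M) : M ⊗[k] M →ₗ[k] M ⊗[k] M :=
  TensorProduct.lift (LinearMap.mk₂ k (fun x y => TensorProduct.map (B x) (B y))
    (fun x x' y => by simp [map_add, TensorProduct.map_add_left])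
    (fun c x y => by simp [map_smul, TensorProduct.map_smul_left])
    (fun x y y' => by simp [map_add, TensorProduct.map_add_right])
    (fun c x y => by simp [map_smul, TensorProduct.map_smul_right])) t

/-- The infinitesimal braiding `ψ(a⊗b) = 2r₊ ▷ (a⊗b − b⊗a)`. -/
noncomputable def infBr (r : M ⊗[k] M) (a b : M) : M ⊗[k] M :=
  actOf B (r + (τ k M) r) (a ⊗ₜ b - b ⊗ₜ a)

end Trip

namespace Trip

variable {k : Type*} [Field k] {M : Type*} [AddCommGroup M] [Module k M]

theorem ρ_assoc (w : (M ⊗[k] M) ⊗[k] M) :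
    ρ k M (TensorProduct.assoc k M M M w) = TensorProduct.comm k (M ⊗[k] M) M w := by
  simp [ρ]

theorem ρ_lTensor_lTensor (f : M →ₗ[k] M) (t : M ⊗[k] (M ⊗[k] M)) :
    ρ k M (lTensor M (lTensor M f) t) = rTensor (M ⊗[k] M) f (ρ k M t) := by
  suffices (ρ k M).toLinearMap ∘ₗ lTensor M (lTensor M f) =
      rTensor (M ⊗[k] M) f ∘ₗ (ρ k M).toLinearMap from LinearMap.congr_fun this t
  exact TensorProduct.ext_threefold' fun _ _ _ => rfl

theorem ρ_rTensor (f : M →ₗ[k] M) (t : M ⊗[k] (M ⊗[k] M)) :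
    ρ k M (rTensor (M ⊗[k] M) f t) = lTensor M (rTensor M f) (ρ k M t) := by
  suffices (ρ k M).toLinearMap ∘ₗ rTensor (M ⊗[k] M) f =
      lTensor M (rTensor M f) ∘ₗ (ρ k M).toLinearMap from LinearMap.congr_fun this t
  exact TensorProduct.ext_threefold' fun _ _ _ => rfl

variable (B : M →ₗ[k] M →ₗ[k] M)

theorem adT_apply (x : M) (w : M ⊗[k] M) :
    adT B x w = rTensor M (B x) w + lTensor M (B x) w := rfl

theorem adT3_apply (x : M) (t : M ⊗[k] (M ⊗[k] M)) :
    adT3 B x t = rTensor (M ⊗[k] M) (B x) t + lTensor M (rTensor M (B x)) t +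
      lTensor M (lTensor M (B x)) t := by
  rw [adT3, LinearMap.add_apply, adT, lTensor_add, LinearMap.add_apply, add_assoc]
  rfl

theorem adT3_assoc (x : M) (w : (M ⊗[k] M) ⊗[k] M) :
    adT3 B x (TensorProduct.assoc k M M M w) =
      TensorProduct.assoc k M M M (rTensor M (adT B x) w + lTensor (M ⊗[k] M) (B x) w) := by
  suffices adT3 B x ∘ₗ (TensorProduct.assoc k M M M).toLinearMap =
      (TensorProduct.assoc k M M M).toLinearMap ∘ₗ (rTensor M (adT B x) + lTensor (M ⊗[k] M) (B x))
    from LinearMap.congr_fun this w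
  refine TensorProduct.ext_threefold fun a b c => ?_
  simp only [adT3_apply, adT_apply, LinearMap.comp_apply, LinearMap.add_apply, LinearEquiv.coe_coe,
    TensorProduct.assoc_tmul, rTensor_tmul, lTensor_tmul, add_tmul, map_add]

theorem ad_lie (hjac : ∀ x y z, B x (B y z) = B (B x y) z + B y (B x z)) (x y : M) :
    B (B x y) = B x ∘ₗ B y - B y ∘ₗ B x := by
  ext z
  simp [hjac x y z]

theorem actOf_tmul (t : M ⊗[k] M) (a b : M) :
    actOf B t (a ⊗ₜ b) = map (B.flip a) (B.flip b) t := by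
  induction t using TensorProduct.induction_on with
  | zero => simp [actOf]
  | tmul u v => rfl
  | add u v hu hv =>
    simp only [actOf, map_add, LinearMap.add_apply] at hu hv ⊢
    rw [hu, hv]

noncomputable def cobr (s : M ⊗[k] M) : M →ₗ[k] M ⊗[k] M := ((lTensorHom M).comp B).flip s

@[simp] theorem cobr_apply (s : M ⊗[k] M) (x : M) : cobr B s x = lTensor M (B x) s := rfl

theorem bco_eq_cobr (r : M ⊗[k] M) : bco B r = cobr B (r + τ k M r) := rfl

theorem flip_eq_neg (hskew : ∀ x y, B x y = -B y x) (x : M) : B.flip x = -B x := by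
  ext y
  exact hskew y x

theorem s1223_tmul_tmul_left (a b : M) (s : M ⊗[k] M) :
    s1223 B ((a ⊗ₜ b) ⊗ₜ s) = a ⊗ₜ rTensor M (B b) s := by
  induction s using TensorProduct.induction_on with
  | zero => simp
  | tmul c d => rfl
  | add u v hu hv => simp only [tmul_add, map_add, hu, hv]

theorem s1223_tmul_tmul_right (t : M ⊗[k] M) (c d : M) :
    s1223 B (t ⊗ₜ (c ⊗ₜ d)) = TensorProduct.assoc k M M M (lTensor M (B.flip c) t ⊗ₜ d) := by
  induction t using TensorProduct.induction_on with
  | zero => simp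
  | tmul a b => rfl
  | add u v hu hv => simp only [add_tmul, map_add, hu, hv]

theorem s1223_tmul_eq_neg_assoc_rTensor_cobr (hskew : ∀ x y, B x y = -B y x)
    (t s : M ⊗[k] M) :
    s1223 B (t ⊗ₜ s) = -TensorProduct.assoc k M M M (rTensor M (cobr B t) s) := by
  induction s using TensorProduct.induction_on with
  | zero => simp
  | tmul c d =>
    rw [s1223_tmul_tmul_right, flip_eq_neg B hskew, lTensor_neg, rTensor_tmul, cobr_apply,
      LinearMap.neg_apply, neg_tmul, map_neg]
  | add u v hu hv => simp only [tmul_add, map_add, hu, hv, neg_add]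

section Invariant

variable {B} {s : M ⊗[k] M} (hinv : ∀ x, adT B x s = 0)
include hinv

theorem rTensor_eq_neg_cobr (x : M) : rTensor M (B x) s = -cobr B s x :=
  eq_neg_of_add_eq_zero_left (hinv x)

theorem map_eq_neg_lTensor_comp (x y : M) : map (B x) (B y) s = -lTensor M (B y ∘ₗ B x) s := by
  rw [← lTensor_comp_rTensor, LinearMap.comp_apply, rTensor_eq_neg_cobr hinv, cobr_apply,
    map_neg, lTensor_comp_apply]

theorem cobr_lie (hjac : ∀ x y z, B x (B y z) = B (B x y) z + B y (B x z)) (x y : M) :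
    cobr B s (B x y) = adT B x (cobr B s y) := by
  rw [adT_apply, cobr_apply, cobr_apply, ← LinearMap.comp_apply (rTensor M _),
    rTensor_comp_lTensor, map_eq_neg_lTensor_comp hinv, ← lTensor_comp_apply, ad_lie B hjac,
    lTensor_sub, LinearMap.sub_apply]
  abel

theorem τ_cobr (hsymm : τ k M s = s) (x : M) : τ k M (cobr B s x) = -cobr B s x := by
  rw [← rTensor_eq_neg_cobr hinv]
  conv_rhs => rw [← hsymm]
  exact (rTensor_comm (B x) s).symm

theorem actOf_sub_eq_cobr (hskew : ∀ x y, B x y = -B y x)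
    (hjac : ∀ x y z, B x (B y z) = B (B x y) z + B y (B x z)) (a b : M) :
    actOf B s (a ⊗ₜ b - b ⊗ₜ a) = cobr B s (B a b) := by
  have hflip : ∀ x y, map (B.flip x) (B.flip y) s = -lTensor M (B y ∘ₗ B x) s := fun x y => by
    rw [← lTensor_comp_rTensor, LinearMap.comp_apply, flip_eq_neg B hskew, flip_eq_neg B hskew,
      lTensor_neg, rTensor_neg, LinearMap.neg_apply, LinearMap.neg_apply, map_neg, neg_neg,
      ← LinearMap.comp_apply, lTensor_comp_rTensor, map_eq_neg_lTensor_comp hinv]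
  rw [map_sub, actOf_tmul, actOf_tmul, hflip, hflip, cobr_apply, ad_lie B hjac, lTensor_sub,
    LinearMap.sub_apply]
  abel

theorem s1223_tmul_eq_neg_lTensor_cobr (t : M ⊗[k] M) :
    s1223 B (t ⊗ₜ s) = -lTensor M (cobr B s) t := by
  induction t using TensorProduct.induction_on with
  | zero => simp
  | tmul a b =>
    rw [s1223_tmul_tmul_left, rTensor_eq_neg_cobr hinv, lTensor_tmul, tmul_neg]
  | add u v hu hv => simp only [add_tmul, map_add, hu, hv, neg_add]

theorem ρ_assoc_rTensor_cobr (hsymm : τ k M s = s) (hskew : ∀ x y, B x y = -B y x) :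
    ρ k M (TensorProduct.assoc k M M M (rTensor M (cobr B s) s)) =
      TensorProduct.assoc k M M M (rTensor M (cobr B s) s) := by
  rw [ρ_assoc, ← lTensor_comm, show TensorProduct.comm k M M s = s from hsymm, ← neg_inj,
    ← s1223_tmul_eq_neg_lTensor_cobr hinv, s1223_tmul_eq_neg_assoc_rTensor_cobr B hskew]

theorem adT3_assoc_rTensor_cobr (hjac : ∀ x y z, B x (B y z) = B (B x y) z + B y (B x z))
    (x : M) : adT3 B x (TensorProduct.assoc k M M M (rTensor M (cobr B s) s)) = 0 := by
  have hcov : adT B x ∘ₗ cobr B s = cobr B s ∘ₗ B x :=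
    LinearMap.ext fun y => (cobr_lie hinv hjac x y).symm
  rw [adT3_assoc, ← rTensor_comp_apply, hcov, rTensor_comp_apply,
    ← LinearMap.comp_apply (lTensor _ _), lTensor_comp_rTensor, ← rTensor_comp_lTensor,
    LinearMap.comp_apply, ← map_add, ← adT_apply, hinv, map_zero, map_zero]

theorem coJacobi_cobr (hsymm : τ k M s = s) (hskew : ∀ x y, B x y = -B y x)
    (hjac : ∀ x y z, B x (B y z) = B (B x y) z + B y (B x z)) : CoJacobi (cobr B s) := by
  intro x
  set U := TensorProduct.assoc k M M M (rTensor M (cobr B s) s)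
  have hU : ρ k M U = U := ρ_assoc_rTensor_cobr hinv hsymm hskew
  have hT : TensorProduct.assoc k M M M (map (cobr B s) LinearMap.id (cobr B s x)) =
      lTensor M (lTensor M (B x)) U := by
    rw [cobr_apply, map_lTensor, LinearMap.id_comp, ← lTensor_comp_rTensor, LinearMap.comp_apply,
      lTensor_tensor]
    simp [U]
  rw [hT, ρ_lTensor_lTensor, hU, ρ_rTensor, hU, ← adT3_assoc_rTensor_cobr hinv hjac x,
    adT3_apply]
  abel

end Invariant

end Trip

/-- For a quasitriangular Lie bialgebra `(g,r)`, the underlying space of `g`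
with the bracket of `g`, the adjoint action, and braided cobracket
`δ̲x = 2r₊⁽¹⁾ ⊗ [x, r₊⁽²⁾]` is a braided-Lie bialgebra in the category of `g`-modules
(the transmutation `g̲`): the bracket and cobracket are covariant, `δ̲` is a Lie cobracket,
and `dδ̲ = ψ`, i.e. `δ̲([a,b]) = ad_a(δ̲b) − ad_b(δ̲a) − ψ(a⊗b)`. -/
theorem statement7 {k : Type*} [Field k] {M : Type*} [AddCommGroup M] [Module k M]
    (B : M →ₗ[k] M →ₗ[k] M) (r : M ⊗[k] M) (h : Trip.IsQT B r) :
    (∀ ξ x y : M, B ξ (B x y) = B (B ξ x) y + B x (B ξ y)) ∧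
    (∀ ξ x : M, Trip.bco B r (B ξ x) = Trip.adT B ξ (Trip.bco B r x)) ∧
    Trip.Antico (Trip.bco B r) ∧ Trip.CoJacobi (Trip.bco B r) ∧
    (∀ a b : M, Trip.bco B r (B a b) =
      Trip.adT B a (Trip.bco B r b) - Trip.adT B b (Trip.bco B r a) - Trip.infBr B r a b) := by
  open Trip in
  obtain ⟨-, hinv, ⟨halt, hjac⟩, -⟩ := h
  have hskew : ∀ x y, B x y = -B y x := fun x y => (LinearMap.IsAlt.neg (B := B) halt y x).symm
  have hsymm : τ k M (r + τ k M r) = r + τ k M r := by simp [τ, add_comm]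
  rw [bco_eq_cobr]
  refine ⟨hjac, cobr_lie hinv hjac, fun x => ?_, coJacobi_cobr hinv hsymm hskew hjac,
    fun a b => ?_⟩
  · rw [τ_cobr hinv hsymm, add_neg_cancel]
  · rw [infBr, actOf_sub_eq_cobr hinv hskew hjac, ← cobr_lie hinv hjac, ← cobr_lie hinv hjac,
      hskew b a, map_neg]
    abel
end

section
/- Let (g, r) be a finite-dimensional factorisable quasitriangular Lie bialgebra. Under the isomorphism 2r₊: g* → g, the braided cobracket δ̲x = 2r₊⁽¹⁾ ⊗ [x, r₊⁽²⁾] on the transmutation g̲ corresponds to the Kirillov–Kostant Lie cobracket on g (the dual of the Lie bracket of g), so that g̲ is self-dual as a braided-Lie bialgebra. -/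
open TensorProduct LinearMap Module

section Statement8Aux

open TensorProduct LinearMap Module Trip

variable {k : Type*} [Field k] {M : Type*} [AddCommGroup M] [Module k M]

lemma contr2_tmul (χ : Module.Dual k M) (a b : M) :
    Trip.contr2 χ (a ⊗ₜ[k] b) = χ b • a := by
  simp [Trip.contr2]

lemma pair_swap (φ ψ : Module.Dual k M) (t : M ⊗[k] M) :
    ψ (Trip.contr2 φ t) = φ (Trip.contr2 ψ ((Trip.τ k M) t)) := by
  induction t using TensorProduct.induction_on with
  | zero => simp
  | tmul a b => simp [contr2_tmul, Trip.τ, mul_comm]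
  | add x y hx hy => simp [map_add, hx, hy]

lemma contr2_lTensor (χ : Module.Dual k M) (f : M →ₗ[k] M) (t : M ⊗[k] M) :
    Trip.contr2 χ (LinearMap.lTensor M f t) = Trip.contr2 (χ ∘ₗ f) t := by
  induction t using TensorProduct.induction_on with
  | zero => simp
  | tmul a b => simp [contr2_tmul]
  | add x y hx hy => simp [map_add, hx, hy]

lemma contr2_rTensor (χ : Module.Dual k M) (f : M →ₗ[k] M) (t : M ⊗[k] M) :
    Trip.contr2 χ (LinearMap.rTensor M f t) = f (Trip.contr2 χ t) := by
  induction t using TensorProduct.induction_on with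
  | zero => simp
  | tmul a b => simp [contr2_tmul]
  | add x y hx hy => simp [map_add, hx, hy]

lemma dualDistrib_eq_pair (ψ χ : Module.Dual k M) (t : M ⊗[k] M) :
    TensorProduct.dualDistrib k M M (ψ ⊗ₜ χ) t = ψ (Trip.contr2 χ t) := by
  induction t using TensorProduct.induction_on with
  | zero => simp
  | tmul a b => simp [contr2_tmul, mul_comm]
  | add x y hx hy => simp [map_add, hx, hy]

end Statement8Aux

/-- For a finite-dimensional factorisable `(g,r)`, under the isomorphism
`2r₊ : g* → g` the braided cobracket `δ̲` of the transmutation corresponds to the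
Kirillov–Kostant cobracket on `g*` (the dual of the Lie bracket), so `g̲` is self-dual. -/
theorem statement8 {k : Type*} [Field k] {M : Type*} [AddCommGroup M] [Module k M]
    [FiniteDimensional k M] (B : M →ₗ[k] M →ₗ[k] M) (r : M ⊗[k] M) (h : Trip.IsQT B r)
    (Q : Module.Dual k M →ₗ[k] M)
    (hQ : ∀ φ, Q φ = Trip.contr2 φ (r + (Trip.τ k M) r))
    (hfact : Function.Bijective Q) :
    ∀ φ : Module.Dual k M,
      Trip.bco B r (Q φ) = (TensorProduct.map Q Q) (Trip.dualCo B φ) := by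
  intro φ
  set s : M ⊗[k] M := r + (Trip.τ k M) r with hs
  have htt : ∀ t : M ⊗[k] M, (Trip.τ k M) ((Trip.τ k M) t) = t := by
    intro t
    induction t using TensorProduct.induction_on with
    | zero => simp
    | tmul a b => simp [Trip.τ]
    | add x y hx hy => simp [map_add, hx, hy]
  have hssym : (Trip.τ k M) s = s := by
    rw [hs, map_add, htt, add_comm]
  have hQsym : ∀ a b : Module.Dual k M, b (Q a) = a (Q b) := by
    intro a b
    rw [hQ, hQ, pair_swap, hssym]
  have hadinv : ∀ x, Trip.adT B x s = 0 := h.2.1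
  have hA : ∀ (x : M) (a c : Module.Dual k M), a (B x (Q c)) + c (B x (Q a)) = 0 := by
    intro x a c
    have h0 : a (Trip.contr2 c (Trip.adT B x s)) = 0 := by rw [hadinv x]; simp
    have hsplit : Trip.adT B x s =
        LinearMap.rTensor M (B x) s + LinearMap.lTensor M (B x) s := rfl
    rw [hsplit, map_add, contr2_rTensor, contr2_lTensor, map_add] at h0
    rw [← hQ c, ← hQ (c ∘ₗ B x)] at h0
    rw [hQsym (c ∘ₗ B x) a] at h0
    simpa using h0
  have hanti : ∀ x y, B x y = - B y x := by
    intro x y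
    have hxy : B x y + B y x = 0 := by
      have h1 := h.2.2.1.1 (x + y)
      have hx := h.2.2.1.1 x
      have hy := h.2.2.1.1 y
      simp only [map_add, LinearMap.add_apply, hx, hy, zero_add, add_zero] at h1
      rwa [add_comm] at h1
    exact eq_neg_of_add_eq_zero_left hxy
  -- the two pairings
  have key : ∀ ψ χ : Module.Dual k M,
      ψ (Trip.contr2 χ (Trip.bco B r (Q φ))) =
        ψ (Trip.contr2 χ ((TensorProduct.map Q Q) (Trip.dualCo B φ))) := by
    intro ψ χ
    have hL : ψ (Trip.contr2 χ (Trip.bco B r (Q φ))) = χ (B (Q φ) (Q ψ)) := by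
      have hbco : Trip.bco B r (Q φ) = LinearMap.lTensor M (B (Q φ)) s := rfl
      rw [hbco, contr2_lTensor, ← hQ (χ ∘ₗ B (Q φ)), hQsym (χ ∘ₗ B (Q φ)) ψ]
      rfl
    have hR : ∀ w : Module.Dual k M ⊗[k] Module.Dual k M,
        ψ (Trip.contr2 χ ((TensorProduct.map Q Q) w)) =
          TensorProduct.dualDistrib k M M w (Q ψ ⊗ₜ Q χ) := by
      intro w
      induction w using TensorProduct.induction_on with
      | zero => simp
      | tmul a b =>
        rw [TensorProduct.map_tmul, contr2_tmul, TensorProduct.dualDistrib_apply,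
          map_smul, smul_eq_mul, hQsym a ψ, hQsym b χ, mul_comm]
      | add x y hx hy => simp [map_add, hx, hy]
    rw [hL, hR]
    have hdd : TensorProduct.dualDistrib k M M (Trip.dualCo B φ) = (Trip.brM B).dualMap φ := by
      show (TensorProduct.dualDistribEquiv k M M) (Trip.dualCo B φ) = (Trip.brM B).dualMap φ
      rw [show Trip.dualCo B φ =
        (TensorProduct.dualDistribEquiv k M M).symm ((Trip.brM B).dualMap φ) from rfl]
      exact (TensorProduct.dualDistribEquiv k M M).apply_symm_apply _
    rw [hdd]
    have hrhs : (Trip.brM B).dualMap φ (Q ψ ⊗ₜ Q χ) = φ (B (Q ψ) (Q χ)) := rfl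
    rw [hrhs]
    have h1 := hA (Q ψ) φ χ
    rw [hanti (Q ψ) (Q φ), map_neg] at h1
    linear_combination -h1
  -- separate by dual functionals
  rw [← sub_eq_zero, ← Module.forall_dual_apply_eq_zero_iff k]
  intro F
  set g := (TensorProduct.dualDistribEquiv k M M).symm F with hg
  have hF : TensorProduct.dualDistrib k M M g = F := by
    show (TensorProduct.dualDistribEquiv k M M) g = F
    exact (TensorProduct.dualDistribEquiv k M M).apply_symm_apply F
  rw [← hF, map_sub, sub_eq_zero]
  induction g using TensorProduct.induction_on with
  | zero => simp
  | tmul a b => rw [dualDistrib_eq_pair, dualDistrib_eq_pair]; exact key a b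
  | add x y hx hy =>
    rw [map_add, LinearMap.add_apply, LinearMap.add_apply, hx, hy]
end

section
/- Let g be a factorisable Lie bialgebra and T(g) the triple with underlying vector space g⊕g⊕g and the double-bosonisation bracket. Then I₋ = {x ⊕ (−x) ⊕ 0 : x ∈ g}, I₀ = {x ⊕ (−x) ⊕ (−x) : x ∈ g}, and I₊ = {0 ⊕ x ⊕ x : x ∈ g} are Lie subalgebras of T(g). -/
open TensorProduct LinearMap Module

namespace Trip

variable {k : Type*} [Field k] {M : Type*} [AddCommGroup M] [Module k M]
variable (B : M →ₗ[k] M →ₗ[k] M)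

/-- The bracket of the triple `T(g)` on `b ⊕ g ⊕ c` with `b = c = g̲` (factorisable case),
 as a plain function. -/
noncomputable def tbr (u v : M × M × M) : M × M × M :=
  (B u.1 v.1 + B u.1 v.2.1 - B u.1 v.2.2 + B u.2.1 v.1 - B u.2.2 v.1,
    B u.1 v.2.2 + B u.2.1 v.2.1 + B u.2.2 v.1,
    B u.2.2 v.1 + B u.2.2 v.2.1 - B u.2.2 v.2.2 + B u.2.1 v.2.2 + B u.1 v.2.2)

/-- The bracket of the triple `T(g)`, bundled as a bilinear map. -/
noncomputable def tripleBr : (M × M × M) →ₗ[k] (M × M × M) →ₗ[k] (M × M × M) :=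
  LinearMap.mk₂ k (tbr B)
    (fun p p' q => by
      refine Prod.ext ?_ (Prod.ext ?_ ?_) <;>
        simp [tbr, map_add, LinearMap.add_apply] <;> abel)
    (fun c p q => by
      refine Prod.ext ?_ (Prod.ext ?_ ?_) <;>
        simp [tbr, map_smul, LinearMap.smul_apply, smul_add, smul_sub])
    (fun p q q' => by
      refine Prod.ext ?_ (Prod.ext ?_ ?_) <;>
        simp [tbr, map_add] <;> abel)
    (fun c p q => by
      refine Prod.ext ?_ (Prod.ext ?_ ?_) <;>
        simp [tbr, map_smul, smul_add, smul_sub])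

/-- The componentwise (direct sum) Lie bracket on `g ⊕ g ⊕ g`. -/
noncomputable def diagBr : (M × M × M) →ₗ[k] (M × M × M) →ₗ[k] (M × M × M) :=
  LinearMap.mk₂ k (fun p q => (B p.1 q.1, B p.2.1 q.2.1, B p.2.2 q.2.2))
    (fun p p' q => by
      refine Prod.ext ?_ (Prod.ext ?_ ?_) <;> simp [map_add, LinearMap.add_apply])
    (fun c p q => by
      refine Prod.ext ?_ (Prod.ext ?_ ?_) <;> simp [map_smul, LinearMap.smul_apply])
    (fun p q q' => by refine Prod.ext ?_ (Prod.ext ?_ ?_) <;> simp [map_add])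
    (fun c p q => by refine Prod.ext ?_ (Prod.ext ?_ ?_) <;> simp [map_smul])

/-- The Lie subalgebra/ideal `I₋ = {x ⊕ (−x) ⊕ 0}` of `T(g)`. -/
def Iminus : Set (M × M × M) := {u | ∃ x : M, u = (x, -x, 0)}

/-- The Lie subalgebra/ideal `I₀ = {x ⊕ (−x) ⊕ (−x)}` of `T(g)`. -/
def Izero : Set (M × M × M) := {u | ∃ x : M, u = (x, -x, -x)}

/-- The Lie subalgebra/ideal `I₊ = {0 ⊕ x ⊕ x}` of `T(g)`. -/
def Iplus : Set (M × M × M) := {u | ∃ x : M, u = (0, x, x)}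

variable (k M) in
/-- The re-diagonalising isomorphism `θ₂ : b ⊕ g ⊕ c ↦ (b+g) ⊕ (b+g−c) ⊕ (g−c)`. -/
noncomputable def theta2 : (M × M × M) →ₗ[k] (M × M × M) :=
  ((LinearMap.fst k M (M × M) +
      (LinearMap.fst k M M) ∘ₗ (LinearMap.snd k M (M × M)))).prod
    (((LinearMap.fst k M (M × M) +
        (LinearMap.fst k M M) ∘ₗ (LinearMap.snd k M (M × M))) -
        (LinearMap.snd k M M) ∘ₗ (LinearMap.snd k M (M × M))).prod
      ((LinearMap.fst k M M) ∘ₗ (LinearMap.snd k M (M × M)) -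
        (LinearMap.snd k M M) ∘ₗ (LinearMap.snd k M (M × M))))

variable (k M) in
/-- The inclusion of the first copy (`A`) of `g` into `g ⊕ g ⊕ g`. -/
noncomputable def iA : M →ₗ[k] M × M × M := LinearMap.inl k M (M × M)

variable (k M) in
/-- The inclusion of the second copy (`B`) of `g` into `g ⊕ g ⊕ g`. -/
noncomputable def iB : M →ₗ[k] M × M × M :=
  (LinearMap.inr k M (M × M)) ∘ₗ (LinearMap.inl k M M)

variable (k M) in
/-- The inclusion of the third copy (`C`) of `g` into `g ⊕ g ⊕ g`. -/
noncomputable def iC : M →ₗ[k] M × M × M :=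
  (LinearMap.inr k M (M × M)) ∘ₗ (LinearMap.inr k M M)

variable (r : M ⊗[k] M)

/-- `r_XY = (r⁽¹⁾ in copy X) ⊗ (r⁽²⁾ in copy Y)`. -/
noncomputable def rXY (f g : M →ₗ[k] M × M × M) : (M × M × M) ⊗[k] (M × M × M) :=
  (TensorProduct.map f g) r

/-- The twisting cocycle piece `χ_XY = r_XY − τ(r_XY)`. -/
noncomputable def chiXY (f g : M →ₗ[k] M × M × M) : (M × M × M) ⊗[k] (M × M × M) :=
  rXY r f g - (τ k (M × M × M)) (rXY r f g)

/-- The direct sum quasitriangular structure `r ⊕ (−r₂₁) ⊕ r` on `g ⊕ g ⊕ g`. -/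
noncomputable def rTriple : (M × M × M) ⊗[k] (M × M × M) :=
  rXY r (iA k M) (iA k M) - (τ k (M × M × M)) (rXY r (iB k M) (iB k M)) +
    rXY r (iC k M) (iC k M)

/-- The full twisting cocycle `χ = χ_AB + χ_BC + χ_AC`. -/
noncomputable def chiTriple : (M × M × M) ⊗[k] (M × M × M) :=
  chiXY r (iA k M) (iB k M) + chiXY r (iB k M) (iC k M) + chiXY r (iA k M) (iC k M)

/-- The quasitriangular structure of the triple `T(g)`:
`r_T = 0⊕r⊕0 + Σₐ (0⊕0⊕fᵃ) ⊗ (eₐ⊕0⊕0)`. -/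
noncomputable def rT {ι : Type*} [Fintype ι] (e f : ι → M) :
    (M × M × M) ⊗[k] (M × M × M) :=
  rXY r (iB k M) (iB k M) + ∑ a : ι, (iC k M (f a)) ⊗ₜ[k] (iA k M (e a))

end Trip

/-- For a factorisable Lie bialgebra `g`, the subspaces
`I₋ = {x ⊕ (−x) ⊕ 0}`, `I₀ = {x ⊕ (−x) ⊕ (−x)}` and `I₊ = {0 ⊕ x ⊕ x}` are Lie subalgebras
of the triple `T(g)` (closed under the triple bracket). -/
theorem statement9 {k : Type*} [Field k] {M : Type*} [AddCommGroup M] [Module k M]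
    [FiniteDimensional k M] (B : M →ₗ[k] M →ₗ[k] M) (r : M ⊗[k] M) (h : Trip.IsQT B r)
    (hfact : Function.Surjective fun φ : Module.Dual k M =>
      Trip.contr2 φ (r + (Trip.τ k M) r)) :
    (∀ u ∈ Trip.Iminus (M := M), ∀ v ∈ Trip.Iminus (M := M),
        Trip.tbr B u v ∈ Trip.Iminus (M := M)) ∧
    (∀ u ∈ Trip.Izero (M := M), ∀ v ∈ Trip.Izero (M := M),
        Trip.tbr B u v ∈ Trip.Izero (M := M)) ∧
    (∀ u ∈ Trip.Iplus (M := M), ∀ v ∈ Trip.Iplus (M := M),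
        Trip.tbr B u v ∈ Trip.Iplus (M := M)) := by
  refine ⟨?_, ?_, ?_⟩
  · rintro _ ⟨x, rfl⟩ _ ⟨y, rfl⟩
    exact ⟨-(B x y), by simp [Trip.tbr]⟩
  · rintro _ ⟨x, rfl⟩ _ ⟨y, rfl⟩
    refine ⟨B x y, ?_⟩
    simp only [Trip.tbr, map_neg, LinearMap.neg_apply, neg_neg]
    refine Prod.ext ?_ (Prod.ext ?_ ?_) <;> abel_nf <;> simp
  · rintro _ ⟨x, rfl⟩ _ ⟨y, rfl⟩
    refine ⟨B x y, ?_⟩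
    simp only [Trip.tbr, map_zero, LinearMap.zero_apply]
    refine Prod.ext ?_ (Prod.ext ?_ ?_) <;> abel_nf <;> simp
end

section
/- Let g be a factorisable Lie bialgebra and T(g) the triple. Then T(g) = I₊ ⊕ I₀ ⊕ I₋ as a direct sum of Lie ideals, with pairwise brackets zero, and T(g) is isomorphic as a Lie algebra to g ⊕ g ⊕ g. Explicitly, θ₂: T(g) → g⊕g⊕g given by θ₂(b⊕g⊕c) = (b+g) ⊕ (b+g−c) ⊕ (g−c) is a Lie algebra isomorphism, where the first summand has the bracket of g, the second the negated bracket identified with g via x ↦ −x, and the third the bracket of g. -/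
open TensorProduct LinearMap Module

/-- `T(g) = I₊ ⊕ I₀ ⊕ I₋` as a direct sum of Lie ideals with pairwise
brackets zero, and `θ₂ : b⊕g⊕c ↦ (b+g) ⊕ (b+g−c) ⊕ (g−c)` is a Lie algebra isomorphism of
`T(g)` with `g ⊕ g ⊕ g` (componentwise bracket, the middle opposite copy being identified
with `g` via `x ↦ −x`). -/
theorem statement11 {k : Type*} [Field k] {M : Type*} [AddCommGroup M] [Module k M]
    [FiniteDimensional k M] (B : M →ₗ[k] M →ₗ[k] M) (r : M ⊗[k] M) (h : Trip.IsQT B r)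
    (hfact : Function.Surjective fun φ : Module.Dual k M =>
      Trip.contr2 φ (r + (Trip.τ k M) r)) :
    (∀ u ∈ Trip.Iminus (M := M), ∀ v ∈ Trip.Izero (M := M), Trip.tbr B u v = 0) ∧
    (∀ u ∈ Trip.Iplus (M := M), ∀ v ∈ Trip.Izero (M := M), Trip.tbr B u v = 0) ∧
    (∀ u ∈ Trip.Iplus (M := M), ∀ v ∈ Trip.Iminus (M := M), Trip.tbr B u v = 0) ∧
    (∀ t : M × M × M, ∃ u ∈ Trip.Iplus (M := M), ∃ v ∈ Trip.Izero (M := M),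
      ∃ w ∈ Trip.Iminus (M := M), t = u + v + w) ∧
    Function.Bijective (Trip.theta2 k M) ∧
    (∀ u v : M × M × M,
      Trip.theta2 k M (Trip.tbr B u v) =
        Trip.diagBr B (Trip.theta2 k M u) (Trip.theta2 k M v)) := by
  refine ⟨?_, ?_, ?_, ?_, ?_, ?_⟩
  · rintro u ⟨x, rfl⟩ v ⟨y, rfl⟩
    refine Prod.ext ?_ (Prod.ext ?_ ?_) <;>
      simp [Trip.tbr, map_neg, LinearMap.neg_apply] <;> abel
  · rintro u ⟨x, rfl⟩ v ⟨y, rfl⟩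
    refine Prod.ext ?_ (Prod.ext ?_ ?_) <;>
      simp [Trip.tbr, map_neg, LinearMap.neg_apply] <;> abel
  · rintro u ⟨x, rfl⟩ v ⟨y, rfl⟩
    refine Prod.ext ?_ (Prod.ext ?_ ?_) <;>
      simp [Trip.tbr, map_neg, LinearMap.neg_apply] <;> abel
  · rintro ⟨b, g, c⟩
    refine ⟨(0, b + g, b + g), ⟨b + g, rfl⟩,
      (b - c + g, -(b - c + g), -(b - c + g)), ⟨b - c + g, rfl⟩,
      (c - g, -(c - g), 0), ⟨c - g, rfl⟩, ?_⟩
    refine Prod.ext ?_ (Prod.ext ?_ ?_) <;> simp <;> abel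
  · refine Function.bijective_iff_has_inverse.mpr
      ⟨fun p => (p.2.1 - p.2.2, p.1 - p.2.1 + p.2.2, p.1 - p.2.1), ?_, ?_⟩
    · rintro ⟨b, g, c⟩
      refine Prod.ext ?_ (Prod.ext ?_ ?_) <;> simp [Trip.theta2] <;> abel
    · rintro ⟨p, q, s⟩
      refine Prod.ext ?_ (Prod.ext ?_ ?_) <;> simp [Trip.theta2] <;> abel
  · rintro ⟨b1, g1, c1⟩ ⟨b2, g2, c2⟩
    refine Prod.ext ?_ (Prod.ext ?_ ?_) <;>
      simp [Trip.theta2, Trip.tbr, Trip.diagBr, map_add, map_sub,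
        LinearMap.add_apply, LinearMap.sub_apply] <;> abel
end
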